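/- Let m ∈ ℕ, x ∈ (0,1), z ∈ [0,1], φ(x)=√(x(1-x)), and let β_m have density m(1-θ)^{m-1} on [0,1]. Then E[φ^m(x)/φ^m(x+(z-x)β_m)] ≤ 1 + (m/(2(m+1)))·|z-x|/φ²(x) + (m/(4(m+1)))·|z-x|²/φ⁴(x) + ((m+4)/(4(m+1)))·|z-x|³/φ⁶(x). -/

import Mathlib

/-!
Put `y = x + (z - x) θ` and `r = min 1 (|z - x| / φ²(x))`. Concavity of `φ²` gives
`φ²(y) ≥ (1 - θ) φ²(x)`, and `φ²` is `1`-Lipschitz on `[0, 1]`, so `φ²(y) ≥ φ²(x) - θ |z - x|`;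
together `φ²(y) ≥ φ²(x) (1 - r θ)`, and the ratio is at most `(1 - r θ)^(-m/2)`.

Let `R_k` be the remainder of the negative binomial series of `(1 - u)^(-A)` after `k` terms.
Since `R_{k+1}' = A R_k` (with `A + 1` in place of `A`), induction on `k` gives
`R_k(r u) ≤ r^k R_k(u)` for `0 ≤ r ≤ 1`. For `k = 3` this bounds `(1 - r θ)^(-m/2)` by a quadratic
in `θ` plus `r³ (1 - θ)^(-m/2)`, whose `β_m`-expectations are the moments `1`, `1/(m+1)`,
`2/((m+1)(m+2))` and `2`. The resulting cubic in `r` is increasing and `r ≤ |z - x| / φ²(x)`.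
-/

open Set MeasureTheory
open scoped Nat

noncomputable def negBinomialCoeff (A : ℝ) (j : ℕ) : ℝ := (ascPochhammer ℝ j).eval A / j !

noncomputable def negBinomialRemainder (A : ℝ) (k : ℕ) (u : ℝ) : ℝ :=
  (1 - u) ^ (-A) - ∑ j ∈ Finset.range k, negBinomialCoeff A j * u ^ j

lemma succ_mul_negBinomialCoeff_succ (A : ℝ) (j : ℕ) :
    (j + 1) * negBinomialCoeff A (j + 1) = A * negBinomialCoeff (A + 1) j := by
  simp only [negBinomialCoeff, ascPochhammer_succ_left, Polynomial.eval_mul, Polynomial.eval_X,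
    Polynomial.eval_comp, Polynomial.eval_add, Polynomial.eval_one, Nat.factorial_succ]
  push_cast
  field_simp

lemma negBinomialRemainder_succ_zero (A : ℝ) (k : ℕ) : negBinomialRemainder A (k + 1) 0 = 0 := by
  simp [negBinomialRemainder, Finset.sum_range_succ', negBinomialCoeff]

lemma negBinomialRemainder_three (A u : ℝ) :
    negBinomialRemainder A 3 u = (1 - u) ^ (-A) - (1 + A * u + A * (A + 1) / 2 * u ^ 2) := by
  simp [negBinomialRemainder, Finset.sum_range_succ, negBinomialCoeff, ascPochhammer_succ_eval]

lemma hasDerivAt_negBinomialRemainder_succ (A : ℝ) (k : ℕ) {u : ℝ} (hu : u < 1) :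
    HasDerivAt (negBinomialRemainder A (k + 1)) (A * negBinomialRemainder (A + 1) k u) u := by
  have hpow : HasDerivAt (fun v : ℝ => (1 - v) ^ (-A)) (A * (1 - u) ^ (-(A + 1))) u :=
    (((hasDerivAt_id u).const_sub 1).rpow_const (p := -A) (Or.inl (sub_pos.2 hu).ne')).congr_deriv
      (by simp only [id]; ring_nf)
  have hsum := HasDerivAt.fun_sum (u := Finset.range (k + 1)) (x := u)
    (fun j _ => (hasDerivAt_pow j u).const_mul (negBinomialCoeff A j))
  refine (hpow.sub hsum).congr_deriv ?_
  rw [Finset.sum_range_succ', negBinomialRemainder, mul_sub, Finset.mul_sum]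
  simp only [Nat.cast_zero, zero_mul, mul_zero, add_zero, Nat.cast_succ, Nat.add_sub_cancel]
  congr 1
  refine Finset.sum_congr rfl fun j _ => ?_
  rw [← mul_assoc, mul_comm _ ((j : ℝ) + 1), succ_mul_negBinomialCoeff_succ, mul_assoc]

theorem negBinomialRemainder_mul_le (k : ℕ) {A r t : ℝ} (hA : 0 ≤ A) (hr₀ : 0 ≤ r) (hr₁ : r ≤ 1)
    (ht₀ : 0 ≤ t) (ht₁ : t < 1) :
    negBinomialRemainder A k (r * t) ≤ r ^ k * negBinomialRemainder A k t := by
  induction k generalizing A t with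
  | zero =>
    simp only [negBinomialRemainder, Finset.range_zero, Finset.sum_empty, sub_zero, pow_zero,
      one_mul]
    exact Real.rpow_le_rpow_of_nonpos (by linarith) (by nlinarith) (by linarith)
  | succ k ih =>
    set R := negBinomialRemainder A (k + 1)
    set R' := negBinomialRemainder (A + 1) k
    have hR : ∀ a ∈ Ico (0 : ℝ) 1, HasDerivAt (fun a => r ^ (k + 1) * R a - R (r * a))
        (A * r * (r ^ k * R' a - R' (r * a))) a := by
      rintro a ⟨ha₀, ha₁⟩
      have hra : r * a < 1 := by nlinarith
      have h₁ := (hasDerivAt_negBinomialRemainder_succ A k ha₁).const_mul (r ^ (k + 1))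
      have h₂ := (hasDerivAt_negBinomialRemainder_succ A k hra).comp a
        ((hasDerivAt_id a).const_mul r)
      refine (h₁.sub h₂).congr_deriv ?_
      ring
    have hmono : MonotoneOn (fun a => r ^ (k + 1) * R a - R (r * a)) (Ico 0 1) := by
      refine monotoneOn_of_hasDerivWithinAt_nonneg (convex_Ico 0 1)
        (fun a ha => (hR a ha).continuousAt.continuousWithinAt)
        (fun a ha => (hR a (interior_subset ha)).hasDerivWithinAt) fun a ha => ?_
      rw [interior_Ico] at ha
      have := ih (A := A + 1) (by linarith) ha.1.le ha.2
      have : 0 ≤ A * r := mul_nonneg hA hr₀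
      nlinarith
    have := hmono ⟨le_rfl, zero_lt_one⟩ ⟨ht₀, ht₁⟩ ht₀
    simp only [mul_zero, negBinomialRemainder_succ_zero, R] at this
    linarith

lemma one_sub_mul_rpow_neg_le {A r t : ℝ} (hA : 0 ≤ A) (hr₀ : 0 ≤ r) (hr₁ : r ≤ 1)
    (ht₀ : 0 ≤ t) (ht₁ : t < 1) :
    (1 - r * t) ^ (-A) ≤ 1 + A * (r * t) + A * (A + 1) / 2 * (r * t) ^ 2
      + r ^ 3 * ((1 - t) ^ (-A) - (1 + A * t + A * (A + 1) / 2 * t ^ 2)) := by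
  have := negBinomialRemainder_mul_le 3 hA hr₀ hr₁ ht₀ ht₁
  rw [negBinomialRemainder_three, negBinomialRemainder_three] at this
  linarith

lemma integral_mono_on_Ioo_of_nonneg {f g : ℝ → ℝ} {a b : ℝ} (hab : a ≤ b)
    (hg : IntervalIntegrable g volume a b) (hf₀ : ∀ x ∈ Ioo a b, 0 ≤ f x)
    (hfg : ∀ x ∈ Ioo a b, f x ≤ g x) :
    ∫ x in a..b, f x ≤ ∫ x in a..b, g x := by
  simp only [intervalIntegral.integral_of_le hab, integral_Ioc_eq_integral_Ioo]
  exact integral_mono_of_nonneg (ae_restrict_of_forall_mem measurableSet_Ioo hf₀)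
    (hg.1.mono_set Ioo_subset_Ioc_self) (ae_restrict_of_forall_mem measurableSet_Ioo hfg)

lemma pow_pred_mul_rpow_neg {u : ℝ} (hu : 0 < u) {n : ℕ} (hn : 1 ≤ n) (p : ℝ) :
    u ^ (n - 1) * u ^ (-p) = u ^ ((n : ℝ) - 1 - p) := by
  rw [← Real.rpow_natCast, ← Real.rpow_add hu, Nat.cast_sub hn, Nat.cast_one, sub_eq_add_neg _ p]

lemma intervalIntegrable_one_sub_rpow {p : ℝ} (hp : -1 < p) :
    IntervalIntegrable (fun θ : ℝ => (1 - θ) ^ p) volume 0 1 := by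
  simpa using
    ((intervalIntegral.intervalIntegrable_rpow' hp (a := 0) (b := 1)).comp_sub_left 1).symm

lemma integral_one_sub_rpow {p : ℝ} (hp : -1 < p) :
    ∫ θ in (0 : ℝ)..1, (1 - θ) ^ p = 1 / (p + 1) := by
  rw [intervalIntegral.integral_comp_sub_left (fun u => u ^ p), integral_rpow (Or.inl hp)]
  simp [Real.zero_rpow (by linarith : p + 1 ≠ 0)]

lemma integral_mul_one_sub_pow_mul_quadratic {m : ℕ} (hm : 1 ≤ m) (a b c : ℝ) :
    ∫ θ in (0 : ℝ)..1, m * (1 - θ) ^ (m - 1) * (a + b * θ + c * θ ^ 2)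
      = a + b / (m + 1) + 2 * c / ((m + 1) * (m + 2)) := by
  obtain ⟨k, rfl⟩ : ∃ k, m = k + 1 := ⟨m - 1, by omega⟩
  have hsub := intervalIntegral.integral_comp_sub_left
    (fun u : ℝ => (k + 1) * u ^ k * (a + b * (1 - u) + c * (1 - u) ^ 2)) (1 : ℝ) (a := 0) (b := 1)
  simp only [sub_sub_cancel, sub_zero, sub_self] at hsub
  push_cast
  rw [hsub]
  have : ∀ u : ℝ, (k + 1) * u ^ k * (a + b * (1 - u) + c * (1 - u) ^ 2)
      = (k + 1) * (a + b + c) * u ^ k - (k + 1) * (b + 2 * c) * u ^ (k + 1)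
        + (k + 1) * c * u ^ (k + 2) := fun u => by ring
  simp only [this]
  rw [intervalIntegral.integral_add, intervalIntegral.integral_sub,
    intervalIntegral.integral_const_mul, intervalIntegral.integral_const_mul,
    intervalIntegral.integral_const_mul, integral_pow, integral_pow, integral_pow]
  · push_cast
    field_simp
    ring
  all_goals exact Continuous.intervalIntegrable (by fun_prop) _ _

theorem integral_mul_le_of_le_one_sub_mul_rpow {m : ℕ} (hm : 1 ≤ m) {r : ℝ} (hr₀ : 0 ≤ r)
    (hr₁ : r ≤ 1) {f : ℝ → ℝ} (hf₀ : ∀ θ ∈ Ioo (0 : ℝ) 1, 0 ≤ f θ)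
    (hf : ∀ θ ∈ Ioo (0 : ℝ) 1, f θ ≤ (1 - r * θ) ^ (-((m : ℝ) / 2))) :
    ∫ θ in (0 : ℝ)..1, m * (1 - θ) ^ (m - 1) * f θ
      ≤ 1 + m / (2 * (m + 1)) * r + m / (4 * (m + 1)) * r ^ 2
        + (m + 4) / (4 * (m + 1)) * r ^ 3 := by
  set A : ℝ := m / 2
  have hm₀ : (m : ℝ) ≠ 0 := by positivity
  have hp : -1 < (m : ℝ) - 1 - A := by
    have : (1 : ℝ) ≤ m := by exact_mod_cast hm
    simp only [A]; linarith
  set g : ℝ → ℝ := fun θ => m * (1 - θ) ^ (m - 1) *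
      ((1 - r ^ 3) + A * (r - r ^ 3) * θ + A * (A + 1) / 2 * (r ^ 2 - r ^ 3) * θ ^ 2)
    + r ^ 3 * m * (1 - θ) ^ ((m : ℝ) - 1 - A)
  have hfg : ∀ θ ∈ Ioo (0 : ℝ) 1, m * (1 - θ) ^ (m - 1) * f θ ≤ g θ := by
    rintro θ ⟨hθ₀, hθ₁⟩
    have hθ : 0 < 1 - θ := by linarith
    have hw : (0 : ℝ) ≤ m * (1 - θ) ^ (m - 1) := by positivity
    calc m * (1 - θ) ^ (m - 1) * f θ
        ≤ m * (1 - θ) ^ (m - 1) * (1 - r * θ) ^ (-A) :=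
          mul_le_mul_of_nonneg_left (hf θ ⟨hθ₀, hθ₁⟩) hw
      _ ≤ m * (1 - θ) ^ (m - 1) * (1 + A * (r * θ) + A * (A + 1) / 2 * (r * θ) ^ 2
          + r ^ 3 * ((1 - θ) ^ (-A) - (1 + A * θ + A * (A + 1) / 2 * θ ^ 2))) :=
        mul_le_mul_of_nonneg_left
          (one_sub_mul_rpow_neg_le (by positivity) hr₀ hr₁ hθ₀.le hθ₁) hw
      _ = g θ := by
        simp only [g]; rw [← pow_pred_mul_rpow_neg hθ hm]; ring
  have hg : IntervalIntegrable g volume 0 1 :=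
    (Continuous.intervalIntegrable (by fun_prop) _ _).add
      ((intervalIntegrable_one_sub_rpow hp).const_mul _)
  calc ∫ θ in (0 : ℝ)..1, m * (1 - θ) ^ (m - 1) * f θ
      ≤ ∫ θ in (0 : ℝ)..1, g θ :=
        integral_mono_on_Ioo_of_nonneg zero_le_one hg (fun θ hθ => by
          have : (0 : ℝ) ≤ 1 - θ := by linarith [hθ.2]
          have := hf₀ θ hθ
          positivity) hfg
    _ = (1 - r ^ 3) + A * (r - r ^ 3) / (m + 1)
          + 2 * (A * (A + 1) / 2 * (r ^ 2 - r ^ 3)) / ((m + 1) * (m + 2))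
        + r ^ 3 * m * (1 / ((m : ℝ) - 1 - A + 1)) := by
      rw [intervalIntegral.integral_add (Continuous.intervalIntegrable (by fun_prop) _ _)
        ((intervalIntegrable_one_sub_rpow hp).const_mul _),
        integral_mul_one_sub_pow_mul_quadratic hm, intervalIntegral.integral_const_mul,
        integral_one_sub_rpow hp]
    _ = _ := by
      rw [show (m : ℝ) - 1 - A + 1 = A by ring]
      simp only [A]
      field_simp
      ring

def phiSq (x : ℝ) : ℝ := x * (1 - x)

lemma one_sub_mul_phiSq_le {x z θ : ℝ} (hz₀ : 0 ≤ z) (hz₁ : z ≤ 1) (hθ₀ : 0 ≤ θ) (hθ₁ : θ ≤ 1) :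
    (1 - θ) * phiSq x ≤ phiSq (x + (z - x) * θ) := by
  have key : phiSq (x + (z - x) * θ) - (1 - θ) * phiSq x
      = θ * phiSq z + θ * (1 - θ) * (x - z) ^ 2 := by
    simp only [phiSq]; ring
  have : 0 ≤ θ * phiSq z := mul_nonneg hθ₀ (mul_nonneg hz₀ (by linarith))
  have : 0 ≤ θ * (1 - θ) * (x - z) ^ 2 := by
    have : 0 ≤ 1 - θ := by linarith
    positivity
  linarith

lemma phiSq_sub_phiSq_le_abs {x y : ℝ} (hx₀ : 0 ≤ x) (hx₁ : x ≤ 1) (hy₀ : 0 ≤ y) (hy₁ : y ≤ 1) :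
    phiSq x - phiSq y ≤ |x - y| := by
  have key : phiSq x - phiSq y = (x - y) * (1 - x - y) := by simp only [phiSq]; ring
  rw [key]
  calc (x - y) * (1 - x - y) ≤ |x - y| * |1 - x - y| := by
        rw [← abs_mul]; exact le_abs_self _
    _ ≤ |x - y| * 1 := by
        gcongr
        exact abs_le.2 ⟨by linarith, by linarith⟩
    _ = |x - y| := mul_one _

lemma phiSq_mul_one_sub_min_mul_le {x z θ : ℝ} (hx₀ : 0 < x) (hx₁ : x < 1) (hz₀ : 0 ≤ z)
    (hz₁ : z ≤ 1) (hθ₀ : 0 ≤ θ) (hθ₁ : θ ≤ 1) :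
    phiSq x * (1 - min 1 (|z - x| / phiSq x) * θ) ≤ phiSq (x + (z - x) * θ) := by
  rcases min_cases 1 (|z - x| / phiSq x) with ⟨h, -⟩ | ⟨h, -⟩ <;> rw [h]
  · simpa [mul_comm] using one_sub_mul_phiSq_le (x := x) hz₀ hz₁ hθ₀ hθ₁
  · have hpos : 0 < phiSq x := mul_pos hx₀ (by linarith)
    have hy : x + (z - x) * θ ∈ Icc (0 : ℝ) 1 := by
      constructor <;> nlinarith
    have := phiSq_sub_phiSq_le_abs hx₀.le hx₁.le hy.1 hy.2
    rw [show x - (x + (z - x) * θ) = -((z - x) * θ) by ring, abs_neg, abs_mul,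
      abs_of_nonneg hθ₀] at this
    rw [mul_sub, mul_one, ← mul_assoc, mul_div_cancel₀ _ hpos.ne']
    linarith

lemma sqrt_pow_div_sqrt_pow_le_rpow_neg (m : ℕ) {s y c : ℝ} (hs : 0 < s) (hc : 0 < c)
    (h : s * c ≤ y) :
    √s ^ m / √y ^ m ≤ c ^ (-((m : ℝ) / 2)) := by
  have hy : 0 < y := lt_of_lt_of_le (mul_pos hs hc) h
  have hsy : s / y ≤ c⁻¹ := by
    rw [div_le_iff₀ hy, inv_mul_eq_div, le_div_iff₀ hc]; exact h
  rw [← div_pow, ← Real.sqrt_div' _ hy.le, Real.sqrt_eq_rpow, ← Real.rpow_natCast,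
    ← Real.rpow_mul (by positivity), Real.rpow_neg hc.le, ← Real.inv_rpow hc.le]
  rw [show 1 / 2 * (m : ℝ) = m / 2 by ring]
  exact Real.rpow_le_rpow (by positivity) hsy (by positivity)

/-- For m ∈ ℕ (m ≥ 1), x ∈ (0,1), z ∈ [0,1], φ(x)=√(x(1-x)), β_m with density
m(1-θ)^{m-1} on [0,1]:
E[φ^m(x)/φ^m(x+(z-x)β_m)] ≤ 1 + (m/(2(m+1)))|z-x|/φ²(x) + (m/(4(m+1)))|z-x|²/φ⁴(x)
  + ((m+4)/(4(m+1)))|z-x|³/φ⁶(x). -/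
theorem phi_ratio_moment_bound (m : ℕ) (hm : 1 ≤ m) (x z : ℝ)
    (hx0 : 0 < x) (hx1 : x < 1) (hz0 : 0 ≤ z) (hz1 : z ≤ 1) :
    ∫ θ in (0:ℝ)..1, ((m : ℝ) * (1 - θ) ^ (m - 1)) *
        (Real.sqrt (x * (1 - x)) ^ m /
          Real.sqrt ((x + (z - x) * θ) * (1 - (x + (z - x) * θ))) ^ m)
      ≤ 1 + ((m : ℝ) / (2 * (m + 1))) * (|z - x| / (x * (1 - x)))
        + ((m : ℝ) / (4 * (m + 1))) * (|z - x| ^ 2 / (x * (1 - x)) ^ 2)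
        + (((m : ℝ) + 4) / (4 * (m + 1))) * (|z - x| ^ 3 / (x * (1 - x)) ^ 3) := by
  have hs : 0 < phiSq x := mul_pos hx0 (by linarith)
  set r := min 1 (|z - x| / phiSq x)
  have hr₀ : 0 ≤ r := le_min zero_le_one (by positivity)
  have hr : r ≤ |z - x| / (x * (1 - x)) := min_le_right _ _
  rw [← div_pow, ← div_pow]
  calc _ ≤ 1 + m / (2 * (m + 1)) * r + m / (4 * (m + 1)) * r ^ 2
        + (m + 4) / (4 * (m + 1)) * r ^ 3 := by
        refine integral_mul_le_of_le_one_sub_mul_rpow hm hr₀ (min_le_left _ _)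
          (fun θ _ => by positivity) fun θ ⟨hθ₀, hθ₁⟩ => ?_
        refine sqrt_pow_div_sqrt_pow_le_rpow_neg m hs ?_
          (phiSq_mul_one_sub_min_mul_le hx0 hx1 hz0 hz1 hθ₀.le hθ₁.le)
        nlinarith [min_le_left 1 (|z - x| / phiSq x)]
    _ ≤ _ := by gcongr
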